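/- Let v, c, w, u ∈ Q and let 1 ≤ i, k, r, p ≤ m with i ≠ k and r ≠ p. Then the four-fold commutator [[E*_{i,v}, E*_{k,c}], [E_{r,w}, E*_{p,u}]] acts on M as follows: (1) if k = r, it sends (z,x,f) to (z, x, f + f_p(x)·⟨w,u⟩·⟨v,c⟩·f_i − f_i(x)·⟨c,v⟩·⟨u,w⟩·f_p) (which is the identity when moreover i = p); (2) if i = r, it sends (z,x,f) to (z, x, f − f_p(x)·⟨w,u⟩·⟨c,v⟩·f_k + f_k(x)·⟨v,c⟩·⟨u,w⟩·f_p) (which is the identity when moreover k = p); (3) if i ≠ r and k ≠ r, it is the identity automorphism of M. -/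

import Mathlib

/-!
The two inner commutators are explicit unipotent maps: `⁅E*_{i,v}, E*_{k,c}⁆` fixes `z` and `x`
and adds `f_i(x)⟨c,v⟩·f_k − f_k(x)⟨v,c⟩·f_i` to `f`, while for `r ≠ p` the map
`⁅E_{r,w}, E*_{p,u}⁆` fixes `z`, subtracts `f_p(x)⟨w,u⟩·x_r` from `x` and adds `f(x_r)⟨u,w⟩·f_p`
to `f`. Composing the four maps, the outer commutator only adds to `f` terms weighted by the
Kronecker deltas `δ_{ri}` and `δ_{rk}`, at most one of which is nonzero since `i ≠ k`; the three
cases of the theorem read off which one.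
-/

open QuadraticMap
open scoped commutatorElement

/-- The DSER elementary orthogonal transformation `E_{i,w}` on `M = Q ⊕ P ⊕ P*`,
`P = A^m`:  `E_{i,w}(z,x,f) = (z − f(xᵢ)•w, x + ⟨w,z⟩•xᵢ − f(xᵢ)·q(w)•xᵢ, f)`. -/
noncomputable def Eplus {A Q : Type*} [CommRing A] [AddCommGroup Q] [Module A Q]
    {m : ℕ} (q : QuadraticForm A Q) (i : Fin m) (w : Q) :
    (Q × (Fin m → A) × (Fin m → A)) ≃ₗ[A] (Q × (Fin m → A) × (Fin m → A)) where
  toFun p := (p.1 - p.2.2 i • w,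
    p.2.1 + polar ⇑q w p.1 • (Pi.single i 1 : Fin m → A)
      - (p.2.2 i * q w) • (Pi.single i 1 : Fin m → A),
    p.2.2)
  invFun p := (p.1 + p.2.2 i • w,
    p.2.1 - polar ⇑q w p.1 • (Pi.single i 1 : Fin m → A)
      - (p.2.2 i * q w) • (Pi.single i 1 : Fin m → A),
    p.2.2)
  map_add' p p' := by
    obtain ⟨z, x, f⟩ := p
    obtain ⟨z', x', f'⟩ := p'
    refine Prod.ext ?_ (Prod.ext ?_ rfl)
    · show z + z' - (f i + f' i) • w = (z - f i • w) + (z' - f' i • w)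
      module
    · show x + x' + polar ⇑q w (z + z') • (Pi.single i 1 : Fin m → A)
        - ((f i + f' i) * q w) • (Pi.single i 1 : Fin m → A) = _
      rw [polar_add_right]
      show _ = (x + polar ⇑q w z • (Pi.single i 1 : Fin m → A) - (f i * q w) • (Pi.single i 1 : Fin m → A))
        + (x' + polar ⇑q w z' • (Pi.single i 1 : Fin m → A) - (f' i * q w) • (Pi.single i 1 : Fin m → A))
      module
  map_smul' a p := by
    obtain ⟨z, x, f⟩ := p
    refine Prod.ext ?_ (Prod.ext ?_ rfl)
    · show a • z - (a • f) i • w = a • (z - f i • w)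
      simp only [Pi.smul_apply, smul_eq_mul]
      module
    · show a • x + polar ⇑q w (a • z) • (Pi.single i 1 : Fin m → A)
        - ((a • f) i * q w) • (Pi.single i 1 : Fin m → A)
        = a • (x + polar ⇑q w z • (Pi.single i 1 : Fin m → A) - (f i * q w) • (Pi.single i 1 : Fin m → A))
      rw [polar_smul_right]
      simp only [Pi.smul_apply, smul_eq_mul]
      module
  left_inv p := by
    obtain ⟨z, x, f⟩ := p
    refine Prod.ext ?_ (Prod.ext ?_ rfl)
    · show z - f i • w + f i • w = z
      module
    · show x + polar ⇑q w z • (Pi.single i 1 : Fin m → A) - (f i * q w) • (Pi.single i 1 : Fin m → A)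
        - polar ⇑q w (z - f i • w) • (Pi.single i 1 : Fin m → A)
        - (f i * q w) • (Pi.single i 1 : Fin m → A) = x
      rw [polar_sub_right, polar_smul_right, polar_self]
      simp only [smul_eq_mul]
      module
  right_inv p := by
    obtain ⟨z, x, f⟩ := p
    refine Prod.ext ?_ (Prod.ext ?_ rfl)
    · show z + f i • w - f i • w = z
      module
    · show x - polar ⇑q w z • (Pi.single i 1 : Fin m → A) - (f i * q w) • (Pi.single i 1 : Fin m → A)
        + polar ⇑q w (z + f i • w) • (Pi.single i 1 : Fin m → A)
        - (f i * q w) • (Pi.single i 1 : Fin m → A) = x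
      rw [polar_add_right, polar_smul_right, polar_self]
      simp only [smul_eq_mul]
      module

/-- The DSER elementary orthogonal transformation `E*_{i,w}` on `M = Q ⊕ P ⊕ P*`:
`E*_{i,w}(z,x,f) = (z − fᵢ(x)•w, x, f + ⟨w,z⟩•fᵢ − fᵢ(x)·q(w)•fᵢ)`. -/
noncomputable def Estar {A Q : Type*} [CommRing A] [AddCommGroup Q] [Module A Q]
    {m : ℕ} (q : QuadraticForm A Q) (i : Fin m) (w : Q) :
    (Q × (Fin m → A) × (Fin m → A)) ≃ₗ[A] (Q × (Fin m → A) × (Fin m → A)) where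
  toFun p := (p.1 - p.2.1 i • w,
    p.2.1,
    p.2.2 + polar ⇑q w p.1 • (Pi.single i 1 : Fin m → A)
      - (p.2.1 i * q w) • (Pi.single i 1 : Fin m → A))
  invFun p := (p.1 + p.2.1 i • w,
    p.2.1,
    p.2.2 - polar ⇑q w p.1 • (Pi.single i 1 : Fin m → A)
      - (p.2.1 i * q w) • (Pi.single i 1 : Fin m → A))
  map_add' p p' := by
    obtain ⟨z, x, f⟩ := p
    obtain ⟨z', x', f'⟩ := p'
    refine Prod.ext ?_ (Prod.ext rfl ?_)
    · show z + z' - (x i + x' i) • w = (z - x i • w) + (z' - x' i • w)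
      module
    · show f + f' + polar ⇑q w (z + z') • (Pi.single i 1 : Fin m → A)
        - ((x i + x' i) * q w) • (Pi.single i 1 : Fin m → A) = _
      rw [polar_add_right]
      show _ = (f + polar ⇑q w z • (Pi.single i 1 : Fin m → A)
          - (x i * q w) • (Pi.single i 1 : Fin m → A))
        + (f' + polar ⇑q w z' • (Pi.single i 1 : Fin m → A)
          - (x' i * q w) • (Pi.single i 1 : Fin m → A))
      module
  map_smul' a p := by
    obtain ⟨z, x, f⟩ := p
    refine Prod.ext ?_ (Prod.ext rfl ?_)
    · show a • z - (a • x) i • w = a • (z - x i • w)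
      simp only [Pi.smul_apply, smul_eq_mul]
      module
    · show a • f + polar ⇑q w (a • z) • (Pi.single i 1 : Fin m → A)
        - ((a • x) i * q w) • (Pi.single i 1 : Fin m → A)
        = a • (f + polar ⇑q w z • (Pi.single i 1 : Fin m → A)
          - (x i * q w) • (Pi.single i 1 : Fin m → A))
      rw [polar_smul_right]
      simp only [Pi.smul_apply, smul_eq_mul]
      module
  left_inv p := by
    obtain ⟨z, x, f⟩ := p
    refine Prod.ext ?_ (Prod.ext rfl ?_)
    · show z - x i • w + x i • w = z
      module
    · show f + polar ⇑q w z • (Pi.single i 1 : Fin m → A)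
        - (x i * q w) • (Pi.single i 1 : Fin m → A)
        - polar ⇑q w (z - x i • w) • (Pi.single i 1 : Fin m → A)
        - (x i * q w) • (Pi.single i 1 : Fin m → A) = f
      rw [polar_sub_right, polar_smul_right, polar_self]
      simp only [smul_eq_mul]
      module
  right_inv p := by
    obtain ⟨z, x, f⟩ := p
    refine Prod.ext ?_ (Prod.ext rfl ?_)
    · show z + x i • w - x i • w = z
      module
    · show f - polar ⇑q w z • (Pi.single i 1 : Fin m → A)
        - (x i * q w) • (Pi.single i 1 : Fin m → A)
        + polar ⇑q w (z + x i • w) • (Pi.single i 1 : Fin m → A)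
        - (x i * q w) • (Pi.single i 1 : Fin m → A) = f
      rw [polar_add_right, polar_smul_right, polar_self]
      simp only [smul_eq_mul]
      module

section ElementaryOrthogonal

variable {A Q : Type*} [CommRing A] [AddCommGroup Q] [Module A Q] {m : ℕ} (q : QuadraticForm A Q)

theorem Estar_apply (i : Fin m) (w z : Q) (x f : Fin m → A) :
    Estar q i w (z, x, f) = (z - x i • w, x,
      f + polar ⇑q w z • (Pi.single i 1 : Fin m → A)
        - (x i * q w) • (Pi.single i 1 : Fin m → A)) := rfl

theorem Estar_inv_apply (i : Fin m) (w z : Q) (x f : Fin m → A) :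
    (Estar q i w)⁻¹ (z, x, f) = (z + x i • w, x,
      f - polar ⇑q w z • (Pi.single i 1 : Fin m → A)
        - (x i * q w) • (Pi.single i 1 : Fin m → A)) := rfl

theorem Eplus_apply (i : Fin m) (w z : Q) (x f : Fin m → A) :
    Eplus q i w (z, x, f) = (z - f i • w,
      x + polar ⇑q w z • (Pi.single i 1 : Fin m → A)
        - (f i * q w) • (Pi.single i 1 : Fin m → A), f) := rfl

theorem Eplus_inv_apply (i : Fin m) (w z : Q) (x f : Fin m → A) :
    (Eplus q i w)⁻¹ (z, x, f) = (z + f i • w,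
      x - polar ⇑q w z • (Pi.single i 1 : Fin m → A)
        - (f i * q w) • (Pi.single i 1 : Fin m → A), f) := rfl

theorem commutator_Estar_Estar_apply (i k : Fin m) (v c z : Q) (x f : Fin m → A) :
    ⁅Estar q i v, Estar q k c⁆ (z, x, f) = (z, x,
      f + (x i * polar ⇑q c v) • (Pi.single k 1 : Fin m → A)
        - (x k * polar ⇑q v c) • (Pi.single i 1 : Fin m → A)) := by
  simp only [commutatorElement_def, LinearEquiv.mul_apply, Estar_inv_apply, Estar_apply]
  refine Prod.ext ?_ (Prod.ext rfl ?_)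
  · module
  · simp only [polar_add_right, polar_sub_right, polar_smul_right, polar_self, smul_eq_mul,
      nsmul_eq_mul, Nat.cast_ofNat]
    module

theorem commutator_Eplus_Estar_apply {r p : Fin m} (hrp : r ≠ p) (w u z : Q) (x f : Fin m → A) :
    ⁅Eplus q r w, Estar q p u⁆ (z, x, f) = (z,
      x - (x p * polar ⇑q w u) • (Pi.single r 1 : Fin m → A),
      f + (f r * polar ⇑q u w) • (Pi.single p 1 : Fin m → A)) := by
  simp only [commutatorElement_def, LinearEquiv.mul_apply, Estar_inv_apply, Eplus_inv_apply,
    Estar_apply, Eplus_apply, Pi.add_apply, Pi.sub_apply, Pi.smul_apply, smul_eq_mul,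
    Pi.single_eq_of_ne hrp, Pi.single_eq_of_ne hrp.symm, mul_zero, sub_zero, add_zero]
  refine Prod.ext ?_ (Prod.ext ?_ ?_) <;>
    simp only [polar_add_right, polar_sub_right, polar_smul_right, polar_self, smul_eq_mul,
      nsmul_eq_mul, Nat.cast_ofNat] <;>
    module

theorem commutator_Eplus_Estar_inv_apply {r p : Fin m} (hrp : r ≠ p) (w u z : Q)
    (x f : Fin m → A) :
    ⁅Eplus q r w, Estar q p u⁆⁻¹ (z, x, f) = (z,
      x + (x p * polar ⇑q w u) • (Pi.single r 1 : Fin m → A),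
      f - (f r * polar ⇑q u w) • (Pi.single p 1 : Fin m → A)) := by
  rw [LinearEquiv.coe_inv, LinearEquiv.symm_apply_eq, commutator_Eplus_Estar_apply q hrp]
  simp only [Pi.add_apply, Pi.sub_apply, Pi.smul_apply, smul_eq_mul, Pi.single_eq_of_ne hrp,
    Pi.single_eq_of_ne hrp.symm, mul_zero, add_zero, sub_zero]
  refine Prod.ext rfl (Prod.ext ?_ ?_) <;> module

theorem fourfold_commutator_apply {i k r p : Fin m} (hik : i ≠ k) (hrp : r ≠ p) (v c w u z : Q)
    (x f : Fin m → A) :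
    ⁅⁅Estar q i v, Estar q k c⁆, ⁅Eplus q r w, Estar q p u⁆⁆ (z, x, f) = (z, x,
      f - (x p * polar ⇑q w u * polar ⇑q c v * (Pi.single r 1 : Fin m → A) i)
            • (Pi.single k 1 : Fin m → A)
        + (x p * polar ⇑q w u * polar ⇑q v c * (Pi.single r 1 : Fin m → A) k)
            • (Pi.single i 1 : Fin m → A)
        + ((x k * polar ⇑q v c * (Pi.single r 1 : Fin m → A) i
              - x i * polar ⇑q c v * (Pi.single r 1 : Fin m → A) k) * polar ⇑q u w)
            • (Pi.single p 1 : Fin m → A)) := by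
  rw [commutatorElement_def, LinearEquiv.mul_apply, LinearEquiv.mul_apply, LinearEquiv.mul_apply,
    commutator_Eplus_Estar_inv_apply q hrp, commutatorElement_inv,
    commutator_Estar_Estar_apply, commutator_Eplus_Estar_apply q hrp,
    commutator_Estar_Estar_apply]
  simp only [Pi.add_apply, Pi.sub_apply, Pi.smul_apply, smul_eq_mul,
    Pi.single_eq_of_ne hrp, Pi.single_eq_of_ne hrp.symm, mul_zero, add_zero, sub_zero]
  refine Prod.ext rfl (Prod.ext (by module) ?_)
  dsimp only
  obtain rfl | hir := eq_or_ne i r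
  · simp only [Pi.single_eq_same, Pi.single_eq_of_ne hik, Pi.single_eq_of_ne hik.symm,
      mul_zero, add_zero, mul_one]
    module
  obtain rfl | hkr := eq_or_ne k r
  · simp only [Pi.single_eq_same, Pi.single_eq_of_ne hik, Pi.single_eq_of_ne hik.symm,
      mul_zero, add_zero, mul_one]
    module
  · simp only [Pi.single_eq_of_ne hir, Pi.single_eq_of_ne hkr, Pi.single_eq_of_ne hir.symm,
      Pi.single_eq_of_ne hkr.symm, mul_zero, add_zero]
    module

end ElementaryOrthogonal

theorem fourfold_commutator_EstarEstar_EplusEstar_general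
    {A Q : Type*} [CommRing A] [AddCommGroup Q] [Module A Q]
    {m : ℕ} (q : QuadraticForm A Q) (i k r p : Fin m)
    (hik : i ≠ k) (hrp : r ≠ p) (v c w u : Q) :
    (k = r → ∀ (z : Q) (x f : Fin m → A),
      ⁅⁅Estar q i v, Estar q k c⁆, ⁅Eplus q r w, Estar q p u⁆⁆ (z, x, f)
        = (z, x,
           f + (x p * polar ⇑q w u * polar ⇑q v c) • (Pi.single i 1 : Fin m → A)
             - (x i * polar ⇑q c v * polar ⇑q u w) • (Pi.single p 1 : Fin m → A))) ∧
    (k = r → i = p → ⁅⁅Estar q i v, Estar q k c⁆, ⁅Eplus q r w, Estar q p u⁆⁆ = 1) ∧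
    (i = r → ∀ (z : Q) (x f : Fin m → A),
      ⁅⁅Estar q i v, Estar q k c⁆, ⁅Eplus q r w, Estar q p u⁆⁆ (z, x, f)
        = (z, x,
           f - (x p * polar ⇑q w u * polar ⇑q c v) • (Pi.single k 1 : Fin m → A)
             + (x k * polar ⇑q v c * polar ⇑q u w) • (Pi.single p 1 : Fin m → A))) ∧
    (i = r → k = p → ⁅⁅Estar q i v, Estar q k c⁆, ⁅Eplus q r w, Estar q p u⁆⁆ = 1) ∧
    (i ≠ r → k ≠ r → ⁅⁅Estar q i v, Estar q k c⁆, ⁅Eplus q r w, Estar q p u⁆⁆ = 1) := by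
  have hδik : (Pi.single k 1 : Fin m → A) i = 0 := Pi.single_eq_of_ne hik 1
  have hδki : (Pi.single i 1 : Fin m → A) k = 0 := Pi.single_eq_of_ne hik.symm 1
  have hcv := polar_comm (⇑q) c v
  have huw := polar_comm (⇑q) u w
  refine ⟨?_, ?_, ?_, ?_, ?_⟩
  · rintro rfl z x f
    rw [fourfold_commutator_apply q hik hrp]
    simp only [hδik, Pi.single_eq_same, mul_zero, mul_one, zero_smul, sub_zero, zero_sub,
      Prod.mk.injEq, true_and]
    module
  · rintro rfl rfl
    ext ⟨z, x, f⟩ : 1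
    rw [fourfold_commutator_apply q hik hrp, hcv, huw, LinearEquiv.coe_one, id]
    simp only [hδik, Pi.single_eq_same, mul_zero, mul_one, zero_smul, sub_zero, zero_sub,
      Prod.mk.injEq, true_and]
    module
  · rintro rfl z x f
    rw [fourfold_commutator_apply q hik hrp]
    simp only [hδki, Pi.single_eq_same, mul_zero, mul_one, zero_smul, sub_zero, add_zero]
  · rintro rfl rfl
    ext ⟨z, x, f⟩ : 1
    rw [fourfold_commutator_apply q hik hrp, hcv, huw, LinearEquiv.coe_one, id]
    simp only [hδki, Pi.single_eq_same, mul_zero, mul_one, zero_smul, sub_zero, add_zero,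
      Prod.mk.injEq, true_and]
    module
  · intro hir hkr
    ext ⟨z, x, f⟩ : 1
    rw [fourfold_commutator_apply q hik hrp, Pi.single_eq_of_ne hir, Pi.single_eq_of_ne hkr]
    simp

theorem fourfold_commutator_EstarEstar_EplusEstar
    {A Q : Type*} [CommRing A] [Invertible (2 : A)] [AddCommGroup Q] [Module A Q]
    {m : ℕ} (q : QuadraticForm A Q) (i k r p : Fin m)
    (hik : i ≠ k) (hrp : r ≠ p) (v c w u : Q) :
    (k = r → ∀ (z : Q) (x f : Fin m → A),
      ⁅⁅Estar q i v, Estar q k c⁆, ⁅Eplus q r w, Estar q p u⁆⁆ (z, x, f)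
        = (z, x,
           f + (x p * polar ⇑q w u * polar ⇑q v c) • (Pi.single i 1 : Fin m → A)
             - (x i * polar ⇑q c v * polar ⇑q u w) • (Pi.single p 1 : Fin m → A))) ∧
    (k = r → i = p → ⁅⁅Estar q i v, Estar q k c⁆, ⁅Eplus q r w, Estar q p u⁆⁆ = 1) ∧
    (i = r → ∀ (z : Q) (x f : Fin m → A),
      ⁅⁅Estar q i v, Estar q k c⁆, ⁅Eplus q r w, Estar q p u⁆⁆ (z, x, f)
        = (z, x,
           f - (x p * polar ⇑q w u * polar ⇑q c v) • (Pi.single k 1 : Fin m → A)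
             + (x k * polar ⇑q v c * polar ⇑q u w) • (Pi.single p 1 : Fin m → A))) ∧
    (i = r → k = p → ⁅⁅Estar q i v, Estar q k c⁆, ⁅Eplus q r w, Estar q p u⁆⁆ = 1) ∧
    (i ≠ r → k ≠ r → ⁅⁅Estar q i v, Estar q k c⁆, ⁅Eplus q r w, Estar q p u⁆⁆ = 1) :=
  fourfold_commutator_EstarEstar_EplusEstar_general q i k r p hik hrp v c w u
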